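/- arXiv:1111.4416 — 3 statements merged into one kernel-verified Lean document; each statement's English description precedes it below -/
import Mathlib

section
/- Let Y = Xβ + ε with β supported on S, and let β̂ be any Lasso solution β̂ = argmin_b ½‖Y − Xb‖²_n + λ‖b‖₁ with λ ≥ 2·max_j |(X^{(j)})'ε|/n. Then ½‖X(β̂ − β)‖²_n + (λ − max_j |(X^{(j)})'ε|/n)·‖β̂_{S^c}‖₁ ≤ (λ + max_j |(X^{(j)})'ε|/n)·‖β̂_S − β_S‖₁. -/
/-!
Comparing the Lasso objective at `β̂` with its value at the truth `β` and expanding the squares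
gives `‖X(β̂ - β)‖²/(2n) + λ‖β̂‖₁ ≤ ε'X(β̂ - β)/n + λ‖β‖₁`. Hölder's inequality bounds the
noise term by `M‖β̂ - β‖₁`, where `M = maxⱼ |X⁽ʲ⁾'ε|/n`. Since `β` vanishes off `S`, both
`‖β̂ - β‖₁` and `‖β‖₁ - ‖β̂‖₁` split along `S` and `Sᶜ`, and the claim is a linear rearrangement.
-/

open Finset Matrix

section Regression

variable {m k : Type*} [Fintype m] [Fintype k]

lemma sum_sq_residual_eq (X : Matrix m k ℝ) (β b : k → ℝ) (ε : m → ℝ) :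
    ∑ i, ((X *ᵥ β) i + ε i - (X *ᵥ b) i) ^ 2 =
      ∑ i, ε i ^ 2 - 2 * (ε ⬝ᵥ X *ᵥ (b - β)) + ∑ i, (X *ᵥ (b - β)) i ^ 2 := by
  simp only [mulVec_sub, dotProduct, Pi.sub_apply, mul_sum, ← sum_sub_distrib,
    ← sum_add_distrib]
  exact sum_congr rfl fun i _ => by ring

lemma lasso_basic_inequality (X : Matrix m k ℝ) (β βhat : k → ℝ) (ε : m → ℝ) (c lam : ℝ)
    (hmin : (∑ i, ((X *ᵥ β) i + ε i - (X *ᵥ βhat) i) ^ 2) / (2 * c) + lam * ∑ j, |βhat j| ≤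
      (∑ i, ((X *ᵥ β) i + ε i - (X *ᵥ β) i) ^ 2) / (2 * c) + lam * ∑ j, |β j|) :
    (∑ i, (X *ᵥ (βhat - β)) i ^ 2) / (2 * c) + lam * ∑ j, |βhat j| ≤
      (ε ⬝ᵥ X *ᵥ (βhat - β)) / c + lam * ∑ j, |β j| := by
  rw [sum_sq_residual_eq] at hmin
  simp only [add_sub_cancel_left] at hmin
  have hsplit : (∑ i, ε i ^ 2 - 2 * (ε ⬝ᵥ X *ᵥ (βhat - β)) + ∑ i, (X *ᵥ (βhat - β)) i ^ 2) /
      (2 * c) = (∑ i, ε i ^ 2) / (2 * c) - (ε ⬝ᵥ X *ᵥ (βhat - β)) / c +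
        (∑ i, (X *ᵥ (βhat - β)) i ^ 2) / (2 * c) := by ring
  linarith

lemma dotProduct_mulVec_eq_sum (X : Matrix m k ℝ) (ε : m → ℝ) (v : k → ℝ) :
    ε ⬝ᵥ X *ᵥ v = ∑ j, v j * ∑ i, X i j * ε i := by
  rw [dotProduct_mulVec, dotProduct_comm]
  simp only [dotProduct, vecMul, mul_comm (ε _)]

lemma sum_mul_le_of_abs_le (f g : k → ℝ) {M : ℝ} (hg : ∀ j, |g j| ≤ M) :
    ∑ j, f j * g j ≤ M * ∑ j, |f j| := by
  rw [mul_sum]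
  refine sum_le_sum fun j _ => ?_
  calc f j * g j ≤ |f j| * |g j| := (le_abs_self _).trans (abs_mul _ _).le
    _ ≤ M * |f j| := by rw [mul_comm M]; exact mul_le_mul_of_nonneg_left (hg j) (abs_nonneg _)

lemma dotProduct_mulVec_div_le (X : Matrix m k ℝ) (ε : m → ℝ) (v : k → ℝ) {c : ℝ} (hc : 0 ≤ c) :
    (ε ⬝ᵥ X *ᵥ v) / c ≤ (⨆ j, |∑ i, X i j * ε i| / c) * ∑ j, |v j| := by
  rw [dotProduct_mulVec_eq_sum, sum_div]
  simp only [mul_div_assoc]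
  refine sum_mul_le_of_abs_le _ _ fun j => ?_
  rw [abs_div, abs_of_nonneg hc]
  exact le_ciSup (Finite.bddAbove_range fun j => |∑ i, X i j * ε i| / c) j

end Regression

section Support

variable {k : Type*} [Fintype k] [DecidableEq k] {S : Finset k} {β : k → ℝ}

lemma sum_abs_sub_eq_of_support (hsupp : ∀ j ∉ S, β j = 0) (b : k → ℝ) :
    ∑ j, |b j - β j| = ∑ j ∈ S, |b j - β j| + ∑ j ∈ Sᶜ, |b j| := by
  rw [← sum_add_sum_compl S]
  congr 1
  exact sum_congr rfl fun j hj => by rw [hsupp j (mem_compl.mp hj), sub_zero]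

lemma sum_abs_sub_sum_abs_le_of_support (hsupp : ∀ j ∉ S, β j = 0) (b : k → ℝ) :
    ∑ j, |β j| - ∑ j, |b j| ≤ ∑ j ∈ S, |b j - β j| - ∑ j ∈ Sᶜ, |b j| := by
  have hβ : ∑ j ∈ Sᶜ, |β j| = 0 :=
    sum_eq_zero fun j hj => by rw [hsupp j (mem_compl.mp hj), abs_zero]
  have htriangle : ∑ j ∈ S, |β j| - ∑ j ∈ S, |b j| ≤ ∑ j ∈ S, |b j - β j| := by
    rw [← sum_sub_distrib]
    exact sum_le_sum fun j _ => by
      rw [abs_sub_comm]; exact abs_sub_abs_le_abs_sub (β j) (b j)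
  rw [← sum_add_sum_compl S, ← sum_add_sum_compl S fun j => |b j|, hβ]
  linarith

end Support

theorem stmt4_general (n p : ℕ)
    (X : Matrix (Fin n) (Fin p) ℝ) (β βhat : Fin p → ℝ) (ε Y : Fin n → ℝ)
    (S : Finset (Fin p)) (hsupp : ∀ j ∉ S, β j = 0)
    (hY : Y = fun i => X.mulVec β i + ε i)
    (lam : ℝ) (hlam : 2 * (⨆ j : Fin p, |∑ i, X i j * ε i| / n) ≤ lam)
    (hmin : ∀ b : Fin p → ℝ,
      (∑ i, (Y i - X.mulVec βhat i) ^ 2) / (2 * n) + lam * ∑ j, |βhat j| ≤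
      (∑ i, (Y i - X.mulVec b i) ^ 2) / (2 * n) + lam * ∑ j, |b j|) :
    (∑ i, (X.mulVec (βhat - β)) i ^ 2) / (2 * n) +
      (lam - ⨆ j : Fin p, |∑ i, X i j * ε i| / n) * ∑ j ∈ Sᶜ, |βhat j| ≤
    (lam + ⨆ j : Fin p, |∑ i, X i j * ε i| / n) * ∑ j ∈ S, |βhat j - β j| := by
  subst hY
  set M := ⨆ j : Fin p, |∑ i, X i j * ε i| / n
  have hbasic := lasso_basic_inequality X β βhat ε n lam (hmin β)
  have hnoise : (ε ⬝ᵥ X *ᵥ (βhat - β)) / n ≤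
      M * (∑ j ∈ S, |βhat j - β j| + ∑ j ∈ Sᶜ, |βhat j|) := by
    rw [← sum_abs_sub_eq_of_support hsupp]
    exact dotProduct_mulVec_div_le X ε _ n.cast_nonneg
  have hM : 0 ≤ M := Real.iSup_nonneg fun j => by positivity
  have hcone : lam * (∑ j, |β j| - ∑ j, |βhat j|) ≤
      lam * (∑ j ∈ S, |βhat j - β j| - ∑ j ∈ Sᶜ, |βhat j|) :=
    mul_le_mul_of_nonneg_left (sum_abs_sub_sum_abs_le_of_support hsupp βhat) (by linarith)
  linarith

/-- basic inequality for the Lasso. -/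
theorem stmt4 (n p : ℕ) (hn : 0 < n) (hp : 0 < p)
    (X : Matrix (Fin n) (Fin p) ℝ) (β βhat : Fin p → ℝ) (ε Y : Fin n → ℝ)
    (S : Finset (Fin p)) (hsupp : ∀ j ∉ S, β j = 0)
    (hY : Y = fun i => X.mulVec β i + ε i)
    (lam : ℝ) (hlam : 2 * (⨆ j : Fin p, |∑ i, X i j * ε i| / n) ≤ lam)
    (hmin : ∀ b : Fin p → ℝ,
      (∑ i, (Y i - X.mulVec βhat i) ^ 2) / (2 * n) + lam * ∑ j, |βhat j| ≤
      (∑ i, (Y i - X.mulVec b i) ^ 2) / (2 * n) + lam * ∑ j, |b j|) :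
    (∑ i, (X.mulVec (βhat - β)) i ^ 2) / (2 * n) +
      (lam - ⨆ j : Fin p, |∑ i, X i j * ε i| / n) * ∑ j ∈ Sᶜ, |βhat j| ≤
    (lam + ⨆ j : Fin p, |∑ i, X i j * ε i| / n) * ∑ j ∈ S, |βhat j - β j| :=
  stmt4_general n p X β βhat ε Y S hsupp hY lam hlam hmin
end

section
/- Let Y = Xβ + ε with supp(β) = S, and let β̂ be a Lasso solution with λ ≥ 2 max|X'ε/n|. Suppose φ(3,S) > 0, where φ²(L,S) is the restricted eigenvalue statistic. Then ‖X(β̂ − β)‖²_n ≤ 4(λ + max|X'ε/n|)²|S|/φ²(3,S) ≤ (9λ²|S|)/φ²(3,S). -/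
/-!
Comparing the Lasso objective at `β̂` and at `β` gives, for `δ = β̂ - β`, the basic inequality
`‖Xδ‖²_n / 2 ≤ ⟨δ, X'ε/n⟩ + λ (‖β‖₁ - ‖β̂‖₁)`. The noise term is at most `max|X'ε/n| ‖δ‖₁` and,
since `β` vanishes off `S`, the penalty difference is at most `‖δ_S‖₁ - ‖δ_{Sᶜ}‖₁`. As
`λ ≥ 2 max|X'ε/n|`, this puts `δ` in the cone with `L = 3`, and Cauchy–Schwarz on `S` gives
`‖Xδ‖²_n / 2 ≤ (λ + max|X'ε/n|) √|S| ‖δ_S‖`. The restricted eigenvalue bound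
`φ²(3,S) ‖δ_S‖² ≤ ‖Xδ‖²_n` turns this into a quadratic inequality in `‖Xδ‖_n`.
-/

open Finset

noncomputable section

/-- Squared Euclidean norm of `δ` restricted to `A`. -/
def sqNormOn {p : ℕ} (A : Finset (Fin p)) (δ : Fin p → ℝ) : ℝ := ∑ i ∈ A, δ i ^ 2

/-- ℓ¹ norm of `δ` restricted to `A`. -/
def l1On {p : ℕ} (A : Finset (Fin p)) (δ : Fin p → ℝ) : ℝ := ∑ i ∈ A, |δ i|

/-- Empirical squared prediction norm `‖Xδ‖²_n = ‖Xδ‖²/n`. -/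
def predSq {n p : ℕ} (X : Matrix (Fin n) (Fin p) ℝ) (δ : Fin p → ℝ) : ℝ :=
  (∑ i, (X.mulVec δ) i ^ 2) / n

/-- The restricted cone condition `‖δ_{S^c}‖₁ ≤ L√|S|‖δ_S‖`. -/
def cone {p : ℕ} (L : ℝ) (S : Finset (Fin p)) (δ : Fin p → ℝ) : Prop :=
  l1On Sᶜ δ ≤ L * Real.sqrt S.card * Real.sqrt (sqNormOn S δ)

/-- Restricted eigenvalue statistic `φ²(L,S) = φ²(L,S,|S|)`. -/
def phiSq {n p : ℕ} (X : Matrix (Fin n) (Fin p) ℝ) (L : ℝ)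
    (S : Finset (Fin p)) : ℝ :=
  sInf {r | ∃ δ : Fin p → ℝ, ∃ M : Finset (Fin p), δ ≠ 0 ∧ S ⊆ M ∧
    M.card ≤ S.card ∧ cone L S δ ∧ r = predSq X δ / sqNormOn M δ}

lemma sqNormOn_nonneg {p : ℕ} (A : Finset (Fin p)) (δ : Fin p → ℝ) : 0 ≤ sqNormOn A δ :=
  sum_nonneg fun _ _ => sq_nonneg _

lemma l1On_nonneg {p : ℕ} (A : Finset (Fin p)) (δ : Fin p → ℝ) : 0 ≤ l1On A δ :=
  sum_nonneg fun _ _ => abs_nonneg _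

lemma predSq_nonneg {n p : ℕ} (X : Matrix (Fin n) (Fin p) ℝ) (δ : Fin p → ℝ) :
    0 ≤ predSq X δ :=
  div_nonneg (sum_nonneg fun _ _ => sq_nonneg _) (Nat.cast_nonneg n)

lemma l1On_add_l1On_compl {p : ℕ} (S : Finset (Fin p)) (δ : Fin p → ℝ) :
    l1On S δ + l1On Sᶜ δ = ∑ j, |δ j| :=
  sum_add_sum_compl S _

lemma l1On_le_sqrt_card_mul_sqrt_sqNormOn {p : ℕ} (A : Finset (Fin p)) (δ : Fin p → ℝ) :
    l1On A δ ≤ Real.sqrt A.card * Real.sqrt (sqNormOn A δ) := by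
  rw [← Real.sqrt_mul (Nat.cast_nonneg _),
    Real.le_sqrt (l1On_nonneg A δ) (mul_nonneg (Nat.cast_nonneg _) (sqNormOn_nonneg A δ))]
  simpa only [l1On, sqNormOn, sq_abs] using sq_sum_le_card_mul_sum_sq (s := A) (f := fun i => |δ i|)

lemma cone_of_l1On_compl_le {p : ℕ} {L : ℝ} {S : Finset (Fin p)} {δ : Fin p → ℝ}
    (hL : 0 ≤ L) (h : l1On Sᶜ δ ≤ L * l1On S δ) : cone L S δ :=
  calc l1On Sᶜ δ ≤ L * l1On S δ := h
    _ ≤ L * (Real.sqrt S.card * Real.sqrt (sqNormOn S δ)) :=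
      mul_le_mul_of_nonneg_left (l1On_le_sqrt_card_mul_sqrt_sqNormOn S δ) hL
    _ = L * Real.sqrt S.card * Real.sqrt (sqNormOn S δ) := (mul_assoc _ _ _).symm

lemma phiSq_mul_sqNormOn_le_predSq {n p : ℕ} (X : Matrix (Fin n) (Fin p) ℝ) {L : ℝ}
    {S : Finset (Fin p)} {δ : Fin p → ℝ} (hcone : cone L S δ) :
    phiSq X L S * sqNormOn S δ ≤ predSq X δ := by
  rcases (sqNormOn_nonneg S δ).eq_or_lt with hQ | hQ
  · rw [← hQ, mul_zero]
    exact predSq_nonneg X δ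
  have hδ : δ ≠ 0 := by
    rintro rfl
    simp [sqNormOn] at hQ
  have hphi : phiSq X L S ≤ predSq X δ / sqNormOn S δ := by
    refine csInf_le ⟨0, ?_⟩ ⟨δ, S, hδ, subset_rfl, le_rfl, hcone, rfl⟩
    rintro r ⟨δ', M, -, -, -, -, rfl⟩
    exact div_nonneg (predSq_nonneg X δ') (sqNormOn_nonneg M δ')
  rwa [le_div_iff₀ hQ] at hphi

lemma sum_mul_le_mul_sum_abs {ι : Type*} [Fintype ι] (w u : ι → ℝ) {m : ℝ}
    (hu : ∀ j, |u j| ≤ m) : ∑ j, w j * u j ≤ m * ∑ j, |w j| := by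
  rw [mul_sum]
  refine sum_le_sum fun j _ => ?_
  calc w j * u j ≤ |w j| * |u j| := (le_abs_self _).trans (abs_mul _ _).le
    _ ≤ |w j| * m := mul_le_mul_of_nonneg_left (hu j) (abs_nonneg _)
    _ = m * |w j| := mul_comm _ _

lemma sum_mul_mulVec_eq_sum_mul_sum {n p : ℕ} (X : Matrix (Fin n) (Fin p) ℝ) (ε : Fin n → ℝ)
    (δ : Fin p → ℝ) : ∑ i, ε i * X.mulVec δ i = ∑ j, δ j * ∑ i, X i j * ε i := by
  have h := Matrix.dotProduct_mulVec ε X δ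
  simp only [dotProduct, Matrix.vecMul] at h
  rw [h]
  exact sum_congr rfl fun j _ => by rw [mul_comm, sum_congr rfl fun i _ => mul_comm (ε i) (X i j)]

def lassoObjective {n p : ℕ} (X : Matrix (Fin n) (Fin p) ℝ) (Y : Fin n → ℝ) (lam : ℝ)
    (b : Fin p → ℝ) : ℝ :=
  (∑ i, (Y i - X.mulVec b i) ^ 2) / (2 * n) + lam * ∑ j, |b j|

section Lasso

variable {n p : ℕ} {X : Matrix (Fin n) (Fin p) ℝ} {β βhat : Fin p → ℝ} {ε Y : Fin n → ℝ}
  {S : Finset (Fin p)} {lam m : ℝ}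

lemma lasso_basic_inequality_s6 (hY : Y = fun i => X.mulVec β i + ε i)
    (hopt : lassoObjective X Y lam βhat ≤ lassoObjective X Y lam β) :
    predSq X (βhat - β) / 2 ≤
      (∑ j, (βhat - β) j * ∑ i, X i j * ε i) / n + lam * (∑ j, |β j| - ∑ j, |βhat j|) := by
  rw [← sum_mul_mulVec_eq_sum_mul_sum]
  set v := X.mulVec (βhat - β)
  have hres : ∀ i, Y i - X.mulVec βhat i = ε i - v i := fun i => by
    simp only [v, hY, Matrix.mulVec_sub, Pi.sub_apply]
    ring
  have hres₀ : ∀ i, Y i - X.mulVec β i = ε i := fun i => by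
    simp only [hY]
    ring
  have hexpand : ∑ i, (ε i - v i) ^ 2 = ∑ i, ε i ^ 2 - 2 * ∑ i, ε i * v i + ∑ i, v i ^ 2 := by
    simp only [sub_sq, sum_add_distrib, sum_sub_distrib, mul_sum, mul_assoc]
  simp only [lassoObjective, hres, hres₀, hexpand] at hopt
  unfold predSq
  linear_combination hopt

lemma sum_abs_sub_sum_abs_le (hsupp : ∀ j ∉ S, β j = 0) :
    ∑ j, |β j| - ∑ j, |βhat j| ≤ l1On S (βhat - β) - l1On Sᶜ (βhat - β) := by
  rw [← sum_add_sum_compl S fun j => |β j|, ← sum_add_sum_compl S fun j => |βhat j|]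
  have hS : ∑ j ∈ S, |β j| - ∑ j ∈ S, |βhat j| ≤ l1On S (βhat - β) := by
    rw [← sum_sub_distrib]
    exact sum_le_sum fun j _ => by
      simpa only [Pi.sub_apply, abs_sub_comm] using abs_sub_abs_le_abs_sub (β j) (βhat j)
  have hβ : ∑ j ∈ Sᶜ, |β j| = 0 :=
    sum_eq_zero fun j hj => by simp [hsupp j (mem_compl.mp hj)]
  have hβhat : ∑ j ∈ Sᶜ, |βhat j| = l1On Sᶜ (βhat - β) :=
    sum_congr rfl fun j hj => by simp [hsupp j (mem_compl.mp hj)]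
  linarith

lemma lasso_oracle_inequality (hY : Y = fun i => X.mulVec β i + ε i)
    (hopt : lassoObjective X Y lam βhat ≤ lassoObjective X Y lam β)
    (hsupp : ∀ j ∉ S, β j = 0) (hlam : 0 ≤ lam) (hm : ∀ j, |∑ i, X i j * ε i| / n ≤ m) :
    predSq X (βhat - β) / 2 ≤
      (lam + m) * l1On S (βhat - β) + (m - lam) * l1On Sᶜ (βhat - β) := by
  have hnoise : (∑ j, (βhat - β) j * ∑ i, X i j * ε i) / n ≤
      m * (l1On S (βhat - β) + l1On Sᶜ (βhat - β)) := by
    rw [l1On_add_l1On_compl, sum_div]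
    simp only [mul_div_assoc]
    exact sum_mul_le_mul_sum_abs _ _ fun j => by rw [abs_div, Nat.abs_cast]; exact hm j
  have hpenalty := mul_le_mul_of_nonneg_left (sum_abs_sub_sum_abs_le (βhat := βhat) hsupp) hlam
  linarith [lasso_basic_inequality_s6 hY hopt]

lemma le_four_mul_sq_div_of_half_le_mul_sqrt {P Q K φ : ℝ} (hφ : 0 < φ)
    (hQ : 0 ≤ Q) (hP : 0 ≤ P) (h : P / 2 ≤ K * Real.sqrt Q) (hφQ : φ * Q ≤ P) :
    P ≤ 4 * K ^ 2 / φ := by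
  rw [le_div_iff₀ hφ]
  rcases hP.eq_or_lt with rfl | hP
  · rw [zero_mul]
    positivity
  have hsq : (P / 2) ^ 2 ≤ K ^ 2 * Q := by
    calc (P / 2) ^ 2 ≤ (K * Real.sqrt Q) ^ 2 := pow_le_pow_left₀ (by positivity) h 2
      _ = K ^ 2 * Q := by rw [mul_pow, Real.sq_sqrt hQ]
  have hφsq := mul_le_mul_of_nonneg_left hφQ (sq_nonneg K)
  refine le_of_mul_le_mul_left ?_ hP
  nlinarith

theorem lasso_predSq_le (hY : Y = fun i => X.mulVec β i + ε i)
    (hopt : lassoObjective X Y lam βhat ≤ lassoObjective X Y lam β)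
    (hsupp : ∀ j ∉ S, β j = 0) (hm₀ : 0 ≤ m) (hm : ∀ j, |∑ i, X i j * ε i| / n ≤ m)
    (hlam : 2 * m ≤ lam) (hphi : 0 < phiSq X 3 S) :
    predSq X (βhat - β) ≤ 4 * (lam + m) ^ 2 * S.card / phiSq X 3 S := by
  set δ := βhat - β
  have hkey := lasso_oracle_inequality hY hopt hsupp (by linarith) hm
  have hP := predSq_nonneg X δ
  have hS := l1On_nonneg S δ
  have hSc := l1On_nonneg Sᶜ δ
  rcases (show 0 ≤ lam by linarith).eq_or_lt with rfl | hlam₀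
  · have hm0 : m = 0 := by linarith
    subst hm0
    exact (show predSq X δ ≤ 0 by linarith).trans (by positivity)
  -- the oracle inequality gives `(λ - m) ‖δ_{Sᶜ}‖₁ ≤ (λ + m) ‖δ_S‖₁`, and `λ + m ≤ 3 (λ - m)`
  have hcone : cone 3 S δ := cone_of_l1On_compl_le (by norm_num) (by nlinarith)
  have hhalf : predSq X δ / 2 ≤ (lam + m) * Real.sqrt S.card * Real.sqrt (sqNormOn S δ) := by
    calc predSq X δ / 2 ≤ (lam + m) * l1On S δ := by nlinarith
      _ ≤ (lam + m) * (Real.sqrt S.card * Real.sqrt (sqNormOn S δ)) :=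
        mul_le_mul_of_nonneg_left (l1On_le_sqrt_card_mul_sqrt_sqNormOn S δ) (by linarith)
      _ = (lam + m) * Real.sqrt S.card * Real.sqrt (sqNormOn S δ) := (mul_assoc _ _ _).symm
  calc predSq X δ ≤ 4 * ((lam + m) * Real.sqrt S.card) ^ 2 / phiSq X 3 S :=
        le_four_mul_sq_div_of_half_le_mul_sqrt hphi (sqNormOn_nonneg S δ) hP
          hhalf (phiSq_mul_sqNormOn_le_predSq X hcone)
    _ = 4 * (lam + m) ^ 2 * S.card / phiSq X 3 S := by
        rw [mul_pow, Real.sq_sqrt (Nat.cast_nonneg _), mul_assoc]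

end Lasso

theorem stmt6_general (n p : ℕ)
    (X : Matrix (Fin n) (Fin p) ℝ) (β βhat : Fin p → ℝ) (ε Y : Fin n → ℝ)
    (S : Finset (Fin p)) (hsupp : ∀ j ∉ S, β j = 0)
    (hY : Y = fun i => X.mulVec β i + ε i)
    (lam : ℝ) (hlam : 2 * (⨆ j : Fin p, |∑ i, X i j * ε i| / n) ≤ lam)
    (hmin : ∀ b : Fin p → ℝ,
      (∑ i, (Y i - X.mulVec βhat i) ^ 2) / (2 * n) + lam * ∑ j, |βhat j| ≤
      (∑ i, (Y i - X.mulVec b i) ^ 2) / (2 * n) + lam * ∑ j, |b j|)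
    (hphi : 0 < phiSq X 3 S) :
    predSq X (βhat - β) ≤
      4 * (lam + ⨆ j : Fin p, |∑ i, X i j * ε i| / n) ^ 2 * S.card / phiSq X 3 S ∧
    predSq X (βhat - β) ≤ 9 * lam ^ 2 * S.card / phiSq X 3 S := by
  set m := ⨆ j : Fin p, |∑ i, X i j * ε i| / n
  have hm : ∀ j, |∑ i, X i j * ε i| / n ≤ m := le_ciSup (Set.finite_range _).bddAbove
  have hm₀ : 0 ≤ m := Real.iSup_nonneg fun _ => by positivity
  have hbound := lasso_predSq_le hY (hmin β) hsupp hm₀ hm hlam hphi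
  refine ⟨hbound, hbound.trans ?_⟩
  gcongr ?_ * _ / _
  nlinarith

/-- Lasso prediction error bound under the restricted eigenvalue
condition. -/
theorem stmt6 (n p : ℕ) (hn : 0 < n) (hp : 0 < p)
    (X : Matrix (Fin n) (Fin p) ℝ) (β βhat : Fin p → ℝ) (ε Y : Fin n → ℝ)
    (S : Finset (Fin p)) (hsupp : ∀ j ∉ S, β j = 0)
    (hY : Y = fun i => X.mulVec β i + ε i)
    (lam : ℝ) (hlam : 2 * (⨆ j : Fin p, |∑ i, X i j * ε i| / n) ≤ lam)
    (hmin : ∀ b : Fin p → ℝ,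
      (∑ i, (Y i - X.mulVec βhat i) ^ 2) / (2 * n) + lam * ∑ j, |βhat j| ≤
      (∑ i, (Y i - X.mulVec b i) ^ 2) / (2 * n) + lam * ∑ j, |b j|)
    (hphi : 0 < phiSq X 3 S) :
    predSq X (βhat - β) ≤
      4 * (lam + ⨆ j : Fin p, |∑ i, X i j * ε i| / n) ^ 2 * S.card / phiSq X 3 S ∧
    predSq X (βhat - β) ≤ 9 * lam ^ 2 * S.card / phiSq X 3 S :=
  stmt6_general n p X β βhat ε Y S hsupp hY lam hlam hmin hphi

end
end

section
/- (Coordinate trimming bound, Lemma 2.2 of van de Geer–Bühlmann used in the proof.) Let v ∈ ℝ^p, T ⊆ {1,…,p}, and let M ⊇ T with |M \ T| = |T| be chosen so that M \ T contains the |T| largest (in absolute value) coordinates of v outside T. Then ‖v_{M^c}‖ ≤ ‖v_{T^c}‖₁/√|T|. -/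
open Finset

/-- coordinate trimming bound. -/
theorem stmt13 (p : ℕ) (v : Fin p → ℝ) (T M : Finset (Fin p))
    (hTM : T ⊆ M) (hT : T.Nonempty) (hcard : (M \ T).card = T.card)
    (hlargest : ∀ i ∈ M \ T, ∀ j ∈ Mᶜ, |v j| ≤ |v i|) :
    Real.sqrt (∑ j ∈ Mᶜ, v j ^ 2) ≤ (∑ j ∈ Tᶜ, |v j|) / Real.sqrt T.card := by
  set k : ℕ := T.card with hk
  set S : ℝ := ∑ j ∈ Tᶜ, |v j| with hS
  have hk0 : (0 : ℝ) < k := by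
    exact_mod_cast Nat.pos_of_ne_zero (fun h => by simp [hk, Finset.card_eq_zero] at h; exact hT.ne_empty h)
  have hS0 : 0 ≤ S := Finset.sum_nonneg fun _ _ => abs_nonneg _
  -- each coordinate outside M is small
  have hbound : ∀ j ∈ Mᶜ, |v j| ≤ S / k := by
    intro j hj
    rw [le_div_iff₀ hk0]
    calc |v j| * k = ∑ _i ∈ M \ T, |v j| := by
          rw [Finset.sum_const, hcard, nsmul_eq_mul, mul_comm]
      _ ≤ ∑ i ∈ M \ T, |v i| := Finset.sum_le_sum fun i hi => hlargest i hi j hj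
      _ ≤ S := Finset.sum_le_sum_of_subset_of_nonneg
          (fun i hi => by
            simp only [Finset.mem_sdiff] at hi
            simp [Finset.mem_compl, hi.2])
          (fun _ _ _ => abs_nonneg _)
  have hMsub : (Mᶜ : Finset (Fin p)) ⊆ Tᶜ := Finset.compl_subset_compl.2 hTM
  have hsum : ∑ j ∈ Mᶜ, v j ^ 2 ≤ S ^ 2 / k := by
    calc ∑ j ∈ Mᶜ, v j ^ 2 ≤ ∑ j ∈ Mᶜ, (S / k) * |v j| := by
          refine Finset.sum_le_sum fun j hj => ?_
          calc v j ^ 2 = |v j| * |v j| := by rw [← sq_abs, sq]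
            _ ≤ (S / k) * |v j| := mul_le_mul_of_nonneg_right (hbound j hj) (abs_nonneg _)
      _ = (S / k) * ∑ j ∈ Mᶜ, |v j| := by rw [Finset.mul_sum]
      _ ≤ (S / k) * S := by
          refine mul_le_mul_of_nonneg_left ?_ (div_nonneg hS0 hk0.le)
          exact Finset.sum_le_sum_of_subset_of_nonneg hMsub (fun _ _ _ => abs_nonneg _)
      _ = S ^ 2 / k := by ring
  calc Real.sqrt (∑ j ∈ Mᶜ, v j ^ 2) ≤ Real.sqrt (S ^ 2 / k) := Real.sqrt_le_sqrt hsum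
    _ = S / Real.sqrt k := by
        rw [Real.sqrt_div (sq_nonneg S), Real.sqrt_sq hS0]
end
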